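/- Let G be a simple graph on a finite vertex set V with |V| = n, represented by a pair of bijections σ₁, σ₂ : V → {0,1,…,n−1} in the sense that distinct vertices u, w are adjacent in G iff (σ₁(u) < σ₁(w)) ↔ (σ₂(w) < σ₂(u)). Fix a vertex v and, for i ∈ {1,2}, define σᵢ' : V → {0,1,…,n−1} by: σᵢ'(x) = σᵢ(x) − σᵢ(v) − 1 if σᵢ(x) > σᵢ(v); σᵢ'(v) = n − 1 − σᵢ(v); and σᵢ'(x) = σᵢ(x) + n − σᵢ(v) if σᵢ(x) < σᵢ(v). Then σ₁' and σ₂' are bijections from V onto {0,1,…,n−1}, and the pair (σ₁', σ₂') represents the Seidel complement G*v: distinct vertices u, w are adjacent in G*v iff (σ₁'(u) < σ₁'(w)) ↔ (σ₂'(w) < σ₂'(u)). -/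

import Mathlib

universe u

/-- The Seidel complement of `G` at `v`: adjacency between the open neighborhood of `v`
and the set of vertices different from `v` and not adjacent to `v` is complemented,
all other adjacencies are unchanged. -/
def seidelCompl {V : Type u} (G : SimpleGraph V) (v : V) : SimpleGraph V where
  Adj x y := x ≠ y ∧
    Xor' (G.Adj x y)
      ((G.Adj v x ∧ ¬ G.Adj v y ∧ y ≠ v) ∨ (G.Adj v y ∧ ¬ G.Adj v x ∧ x ≠ v))
  symm := ⟨by
    rintro x y ⟨hxy, h⟩
    refine ⟨hxy.symm, ?_⟩
    have h1 : G.Adj x y ↔ G.Adj y x := G.adj_comm x y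
    unfold Xor' at h ⊢
    rw [← h1, or_comm]
    exact h⟩
  loopless := ⟨fun x h => h.1 rfl⟩

/-! The cut at `v` lists first the vertices after `v`, then `v`, then the vertices before `v`,
each block in its original order. So two vertices other than `v` keep their relative order in
`σᵢ'` when they lie on the same side of `v` in `σᵢ` and swap it otherwise, while `v` ends up
after exactly the vertices that followed it. Writing `pᵢ(x)` for "`x` comes after `v` in `σᵢ`",
adjacency to `v` is `p₁(x) ≠ p₂(x)`, and the relation represented by `(σ₁', σ₂')` on `u, w ≠ v`
is adjacency in `G` twisted by `[p₁(u) ≠ p₂(u)] ≠ [p₁(w) ≠ p₂(w)]`, i.e. by whether exactly one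
of `u, w` is a neighbour of `v`: this is the Seidel complement. -/

namespace SimpleGraph

variable {V : Type u} (G : SimpleGraph V) {v : V}

theorem seidelCompl_adj_left (w : V) : (seidelCompl G v).Adj v w ↔ G.Adj v w := by
  change v ≠ w ∧ Xor _ _ ↔ _
  have := G.irrefl (v := v)
  have : G.Adj v w → v ≠ w := G.ne_of_adj
  unfold Xor
  tauto

theorem seidelCompl_adj_of_ne {u w : V} (hu : u ≠ v) (hw : w ≠ v) (huw : u ≠ w) :
    (seidelCompl G v).Adj u w ↔ (G.Adj u w ↔ (G.Adj v u ↔ G.Adj v w)) := by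
  change u ≠ w ∧ Xor _ _ ↔ _
  unfold Xor
  tauto

def IsPermRep (σ₁ σ₂ : V → ℕ) : Prop :=
  ∀ u w : V, u ≠ w → (G.Adj u w ↔ ((σ₁ u < σ₁ w) ↔ (σ₂ w < σ₂ u)))

end SimpleGraph

/-- Position of `k` once `0, …, n-1` is reordered as `a+1, …, n-1, a, 0, …, a-1`. -/
def cutAt (n a k : ℕ) : ℕ :=
  if a < k then k - a - 1 else if k = a then n - 1 - a else k + n - a

section cutAt

variable {n a k l : ℕ}

theorem cutAt_of_lt (h : a < k) : cutAt n a k = k - a - 1 := if_pos h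

theorem cutAt_self : cutAt n a a = n - 1 - a := by simp [cutAt]

theorem cutAt_of_gt (h : k < a) : cutAt n a k = k + n - a := by
  simp [cutAt, h.not_gt, h.ne]

theorem cutAt_lt (hk : k < n) : cutAt n a k < n := by
  unfold cutAt; split_ifs <;> omega

theorem cutAt_bijOn (ha : a < n) : Set.BijOn (cutAt n a) (Set.Iio n) (Set.Iio n) := by
  have hmaps : Set.MapsTo (cutAt n a) (Set.Iio n) (Set.Iio n) := fun _ hk => cutAt_lt hk
  refine ((Set.finite_Iio n).injOn_iff_bijOn_of_mapsTo hmaps).1 fun k hk l hl hkl => ?_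
  simp only [Set.mem_Iio] at hk hl
  unfold cutAt at hkl
  split_ifs at hkl <;> omega

theorem cutAt_lt_cutAt_iff (ha : a < n) (hk : k < n) (hl : l < n) (hka : k ≠ a) (hla : l ≠ a) :
    cutAt n a k < cutAt n a l ↔ (k < l ↔ (a < k ↔ a < l)) := by
  unfold cutAt; split_ifs <;> omega

theorem cutAt_self_lt_cutAt_iff (ha : a < n) (hk : k < n) :
    cutAt n a a < cutAt n a k ↔ k < a := by
  unfold cutAt; split_ifs <;> omega

theorem cutAt_lt_cutAt_self_iff (hk : k < n) : cutAt n a k < cutAt n a a ↔ a < k := by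
  unfold cutAt; split_ifs <;> omega

end cutAt

theorem eq_cutAt_comp {V : Type u} {σ σ' : V → ℕ} (hσ : σ.Injective) {n : ℕ} {v : V}
    (hdef : ∀ x : V,
      (σ v < σ x → σ' x = σ x - σ v - 1) ∧
      (x = v → σ' x = n - 1 - σ v) ∧
      (σ x < σ v → σ' x = σ x + n - σ v)) :
    σ' = cutAt n (σ v) ∘ σ := by
  funext x
  obtain ⟨hgt, hself, hlt⟩ := hdef x
  rcases lt_trichotomy (σ x) (σ v) with h | h | h
  · rw [hlt h, Function.comp_apply, cutAt_of_gt h]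
  · obtain rfl := hσ h
    rw [hself rfl, Function.comp_apply, cutAt_self]
  · rw [hgt h, Function.comp_apply, cutAt_of_lt h]

namespace SimpleGraph

variable {V : Type u} {G : SimpleGraph V} {σ₁ σ₂ : V → ℕ}

theorem IsPermRep.seidelCompl_cutAt {n : ℕ} (hrep : G.IsPermRep σ₁ σ₂) (h₁ : σ₁.Injective)
    (h₂ : σ₂.Injective) (hlt₁ : ∀ x, σ₁ x < n) (hlt₂ : ∀ x, σ₂ x < n) (v : V) :
    (seidelCompl G v).IsPermRep (cutAt n (σ₁ v) ∘ σ₁) (cutAt n (σ₂ v) ∘ σ₂) := by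
  intro u w huw
  simp only [Function.comp_apply]
  by_cases huv : u = v
  · subst huv
    rw [seidelCompl_adj_left, hrep u w huw, cutAt_self_lt_cutAt_iff (hlt₁ u) (hlt₁ w),
      cutAt_lt_cutAt_self_iff (hlt₂ w)]
    have := h₁.ne huw; have := h₂.ne huw
    omega
  by_cases hwv : w = v
  · subst hwv
    rw [(seidelCompl G w).adj_comm, seidelCompl_adj_left, hrep w u (Ne.symm huw),
      cutAt_lt_cutAt_self_iff (hlt₁ u), cutAt_self_lt_cutAt_iff (hlt₂ w) (hlt₂ u)]
  have hside : ∀ x, x ≠ v → (σ₂ x < σ₂ v ↔ ¬σ₂ v < σ₂ x) := fun x hx => by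
    have := h₂.ne hx; omega
  rw [seidelCompl_adj_of_ne G huv hwv huw, hrep u w huw, hrep v u (Ne.symm huv),
    hrep v w (Ne.symm hwv), hside u huv, hside w hwv,
    cutAt_lt_cutAt_iff (hlt₁ v) (hlt₁ u) (hlt₁ w) (h₁.ne huv) (h₁.ne hwv),
    cutAt_lt_cutAt_iff (hlt₂ v) (hlt₂ w) (hlt₂ u) (h₂.ne hwv) (h₂.ne huv)]
  grind

end SimpleGraph

theorem seidelCompl_permutation_representation_general {V : Type u} (G : SimpleGraph V)
    (n : ℕ)
    (σ₁ σ₂ : V → ℕ)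
    (hbij₁ : Set.BijOn σ₁ Set.univ (Set.Iio n))
    (hbij₂ : Set.BijOn σ₂ Set.univ (Set.Iio n))
    (hrep : ∀ u w : V, u ≠ w → (G.Adj u w ↔ ((σ₁ u < σ₁ w) ↔ (σ₂ w < σ₂ u))))
    (v : V) (σ₁' σ₂' : V → ℕ)
    (hdef₁ : ∀ x : V,
      (σ₁ v < σ₁ x → σ₁' x = σ₁ x - σ₁ v - 1) ∧
      (x = v → σ₁' x = n - 1 - σ₁ v) ∧
      (σ₁ x < σ₁ v → σ₁' x = σ₁ x + n - σ₁ v))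
    (hdef₂ : ∀ x : V,
      (σ₂ v < σ₂ x → σ₂' x = σ₂ x - σ₂ v - 1) ∧
      (x = v → σ₂' x = n - 1 - σ₂ v) ∧
      (σ₂ x < σ₂ v → σ₂' x = σ₂ x + n - σ₂ v)) :
    Set.BijOn σ₁' Set.univ (Set.Iio n) ∧ Set.BijOn σ₂' Set.univ (Set.Iio n) ∧
    ∀ u w : V, u ≠ w →
      ((seidelCompl G v).Adj u w ↔ ((σ₁' u < σ₁' w) ↔ (σ₂' w < σ₂' u))) := by
  have h₁ : σ₁.Injective := Set.injOn_univ.1 hbij₁.injOn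
  have h₂ : σ₂.Injective := Set.injOn_univ.1 hbij₂.injOn
  have hlt₁ : ∀ x, σ₁ x < n := fun x => hbij₁.mapsTo (Set.mem_univ x)
  have hlt₂ : ∀ x, σ₂ x < n := fun x => hbij₂.mapsTo (Set.mem_univ x)
  rw [eq_cutAt_comp h₁ hdef₁, eq_cutAt_comp h₂ hdef₂]
  exact ⟨(cutAt_bijOn (hlt₁ v)).comp hbij₁, (cutAt_bijOn (hlt₂ v)).comp hbij₂,
    SimpleGraph.IsPermRep.seidelCompl_cutAt hrep h₁ h₂ hlt₁ hlt₂ v⟩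

/-- If `(σ₁, σ₂)` is a permutation representation of `G` (bijections onto `{0,…,n-1}`,
distinct vertices adjacent iff the two induced orders disagree), and `σᵢ'` is obtained by
the cyclic cut at `v` (`σᵢ'(x) = σᵢ(x) - σᵢ(v) - 1` if `σᵢ(x) > σᵢ(v)`,
`σᵢ'(v) = n - 1 - σᵢ(v)`, and `σᵢ'(x) = σᵢ(x) + n - σᵢ(v)` if `σᵢ(x) < σᵢ(v)`),
then `(σ₁', σ₂')` is a pair of bijections onto `{0,…,n-1}` representing
the Seidel complement `G*v`. -/
theorem seidelCompl_permutation_representation {V : Type u} [Fintype V] (G : SimpleGraph V)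
    (n : ℕ) (hn : n = Fintype.card V)
    (σ₁ σ₂ : V → ℕ)
    (hbij₁ : Set.BijOn σ₁ Set.univ (Set.Iio n))
    (hbij₂ : Set.BijOn σ₂ Set.univ (Set.Iio n))
    (hrep : ∀ u w : V, u ≠ w → (G.Adj u w ↔ ((σ₁ u < σ₁ w) ↔ (σ₂ w < σ₂ u))))
    (v : V) (σ₁' σ₂' : V → ℕ)
    (hdef₁ : ∀ x : V,
      (σ₁ v < σ₁ x → σ₁' x = σ₁ x - σ₁ v - 1) ∧
      (x = v → σ₁' x = n - 1 - σ₁ v) ∧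
      (σ₁ x < σ₁ v → σ₁' x = σ₁ x + n - σ₁ v))
    (hdef₂ : ∀ x : V,
      (σ₂ v < σ₂ x → σ₂' x = σ₂ x - σ₂ v - 1) ∧
      (x = v → σ₂' x = n - 1 - σ₂ v) ∧
      (σ₂ x < σ₂ v → σ₂' x = σ₂ x + n - σ₂ v)) :
    Set.BijOn σ₁' Set.univ (Set.Iio n) ∧ Set.BijOn σ₂' Set.univ (Set.Iio n) ∧
    ∀ u w : V, u ≠ w →
      ((seidelCompl G v).Adj u w ↔ ((σ₁' u < σ₁' w) ↔ (σ₂' w < σ₂' u))) :=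
  seidelCompl_permutation_representation_general G n σ₁ σ₂ hbij₁ hbij₂ hrep v σ₁' σ₂' hdef₁ hdef₂
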